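/- Let n ≥ 3 and let P = [2] × [2n−3] be the product of a 2-element chain and a (2n−3)-element chain. Then the reverse operator 𝔛 acting on the lower sets of P has exactly n−1 orbits, each orbit has exactly 2n−1 elements, and each orbit contains exactly one lower set of cardinality 2n−3. -/

import Mathlib

/-- The reverse operator `𝔛` on lower sets of a poset: the lower set generated by
the minimal elements of the complement. -/
def XRev {α : Type*} [PartialOrder α] (I : Set α) : Set α :=
  {x | ∃ y, Minimal (fun z => z ∈ Iᶜ) y ∧ x ≤ y}

/-- The `𝔛`-orbit of a lower set `I` of a finite poset (forward iteration; since
`𝔛` is a bijection on lower sets of a finite poset, this is the full orbit). -/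
def XOrbit {α : Type*} [PartialOrder α] (I : Set α) : Set (Set α) :=
  {J | ∃ k : ℕ, XRev^[k] I = J}

/-!
Write `m = 2n - 3`. Encode the lower set of `[2] × [m]` with rows of lengths `a ≥ b` by the
unordered pair `{a + 1, b + 1}` in `ZMod (m + 2)`, where `b + 1` is replaced by `0` when `a = b`.
This is a bijection onto the 2-element subsets of `ZMod (m + 2)`, and it turns `𝔛` into the
rotation `x ↦ x + 1`. Each rotation step adds `2` to the sum of the pair; as `m` is odd, this is
invertible modulo `m + 2`, so every orbit has exactly `m + 2` elements and exactly one of them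
has sum `0`. The pairs of sum `0` are precisely the lower sets of cardinality `m`, and there are
`(m + 1) / 2` of them, one per orbit.
-/

namespace Function

variable {α : Type*} {f : α → α} {x y : α}

lemma ncard_range_iterate (hx : x ∈ periodicPts f) :
    (Set.range (f^[·] x)).ncard = minimalPeriod f x := by
  have : Set.range (f^[·] x) = (f^[·] x) '' Set.Iio (minimalPeriod f x) := by
    refine subset_antisymm ?_ (Set.image_subset_range _ _)
    rintro _ ⟨k, rfl⟩
    exact ⟨k % minimalPeriod f x, Nat.mod_lt _ (minimalPeriod_pos_of_mem_periodicPts hx),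
      iterate_mod_minimalPeriod_eq⟩
  rw [this, iterate_injOn_Iio_minimalPeriod.ncard_image, Set.ncard_Iio_nat]

lemma range_iterate_eq_of_mem (hx : x ∈ periodicPts f) (hy : y ∈ Set.range (f^[·] x)) :
    Set.range (f^[·] y) = Set.range (f^[·] x) := by
  obtain ⟨j, rfl⟩ := hy
  refine subset_antisymm ?_ ?_
  · rintro _ ⟨k, rfl⟩
    exact ⟨k + j, iterate_add_apply f k j x⟩
  · rintro _ ⟨k, rfl⟩
    have hj : j ≤ minimalPeriod f x * j :=
      Nat.le_mul_of_pos_left j (minimalPeriod_pos_of_mem_periodicPts hx)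
    refine ⟨minimalPeriod f x * j - j + k, ?_⟩
    dsimp only
    rw [← iterate_add_apply, show minimalPeriod f x * j - j + k + j = k + minimalPeriod f x * j by
      omega, iterate_add_apply, ((isPeriodicPt_minimalPeriod f x).mul_const j).eq]

end Function

lemma Sym2.add_map_add_right {M : Type*} [AddCommMonoid M] (z : Sym2 M) (k : M) :
    (z.map (· + k)).add = z.add + 2 • k := by
  induction z using Sym2.inductionOn with
  | hf x y => simp only [Sym2.map_mk, Sym2.add_mk, two_nsmul]; abel

lemma ZMod.isUnit_two {N : ℕ} (hN : Odd N) : IsUnit (2 : ZMod N) := by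
  exact_mod_cast (ZMod.isUnit_iff_coprime 2 N).2 (Nat.coprime_two_left.2 hN)

lemma Sym2.map_add_right_injective {N : ℕ} (hN : Odd N) (z : Sym2 (ZMod N)) :
    Function.Injective fun k : ZMod N => z.map (· + k) := by
  intro k l h
  have := congrArg Sym2.add h
  simp only [Sym2.add_map_add_right, nsmul_eq_mul, Nat.cast_ofNat, add_right_inj] at this
  exact (ZMod.isUnit_two hN).mul_left_cancel this

namespace TwoRow

variable {m : ℕ} {p : ℕ × ℕ}

def shapes (m : ℕ) : Set (ℕ × ℕ) := {p | p.2 ≤ p.1 ∧ p.1 ≤ m}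

def twoRow (m : ℕ) (p : ℕ × ℕ) : Set (Fin 2 × Fin m) :=
  {x | x.2.val < if x.1 = 0 then p.1 else p.2}

@[simp] lemma mem_twoRow_zero {j : Fin m} : ((0 : Fin 2), j) ∈ twoRow m p ↔ j.val < p.1 := .rfl

@[simp] lemma mem_twoRow_one {j : Fin m} : ((1 : Fin 2), j) ∈ twoRow m p ↔ j.val < p.2 := .rfl

lemma isLowerSet_twoRow (hp : p ∈ shapes m) : IsLowerSet (twoRow m p) := by
  rintro ⟨i, j⟩ ⟨i', j'⟩ ⟨hi, hj⟩
  have hj : j'.val ≤ j.val := hj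
  have := hp.1
  revert i i'
  simp only [Fin.forall_fin_two, mem_twoRow_zero, mem_twoRow_one]
  omega

lemma twoRow_injOn : Set.InjOn (twoRow m) (shapes m) := by
  rintro ⟨a, b⟩ ⟨hba, ham⟩ ⟨a', b'⟩ ⟨hba', ham'⟩ h
  have row0 (j : ℕ) (hj : j < m) : j < a ↔ j < a' := by
    simpa using Set.ext_iff.1 h (0, ⟨j, hj⟩)
  have row1 (j : ℕ) (hj : j < m) : j < b ↔ j < b' := by
    simpa using Set.ext_iff.1 h (1, ⟨j, hj⟩)
  dsimp only at hba ham hba' ham'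
  ext
  · by_contra hne
    have := row0 (min a a') (by omega)
    omega
  · by_contra hne
    have := row1 (min b b') (by omega)
    omega

lemma exists_forall_mem_iff_val_lt {S : Set (Fin m)} (hS : IsLowerSet S) :
    ∃ a ≤ m, ∀ j, j ∈ S ↔ j.val < a := by
  rcases hS.eq_univ_or_Iio with rfl | ⟨a, rfl⟩
  · exact ⟨m, le_rfl, fun j => by simp⟩
  · exact ⟨a, a.isLt.le, fun j => Fin.lt_def⟩

lemma exists_eq_twoRow {I : Set (Fin 2 × Fin m)} (hI : IsLowerSet I) :
    ∃ p ∈ shapes m, I = twoRow m p := by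
  have row (i : Fin 2) : IsLowerSet {j | (i, j) ∈ I} :=
    fun j j' hj h => hI (show (i, j') ≤ (i, j) from ⟨le_rfl, hj⟩) h
  obtain ⟨a, ham, ha⟩ := exists_forall_mem_iff_val_lt (row 0)
  obtain ⟨b, hbm, hb⟩ := exists_forall_mem_iff_val_lt (row 1)
  have hba : b ≤ a := by
    by_contra! hab
    have h1 : ((1 : Fin 2), (⟨a, by omega⟩ : Fin m)) ∈ I := (hb _).2 hab
    have h0 := hI (show ((0 : Fin 2), _) ≤ (1, _) from ⟨Fin.zero_le _, le_rfl⟩) h1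
    exact lt_irrefl a ((ha _).1 h0)
  exact ⟨(a, b), ⟨hba, ham⟩, Set.ext (Prod.forall.2 (Fin.forall_fin_two.2 ⟨ha, hb⟩))⟩

lemma ncard_setOf_val_lt {a : ℕ} (ha : a ≤ m) : {j : Fin m | j.val < a}.ncard = a := by
  rw [Set.ncard_eq_toFinset_card', Set.toFinset_ofPred, Fin.card_filter_val_lt]
  omega

lemma ncard_twoRow (hp : p ∈ shapes m) : (twoRow m p).ncard = p.1 + p.2 := by
  have : twoRow m p = {0} ×ˢ {j | j.val < p.1} ∪ {1} ×ˢ {j | j.val < p.2} := by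
    ext ⟨i, j⟩; fin_cases i <;> simp [twoRow]
  rw [this, Set.ncard_union_eq (by simp [Set.disjoint_left]), Set.ncard_prod, Set.ncard_prod,
    ncard_setOf_val_lt hp.2, ncard_setOf_val_lt (hp.1.trans hp.2)]
  simp

lemma minimal_compl_twoRow_iff {y : Fin 2 × Fin m} :
    Minimal (· ∈ (twoRow m p)ᶜ) y ↔
      (y.1 = 0 ∧ y.2.val = p.1) ∨ (y.1 = 1 ∧ y.2.val = p.2 ∧ p.2 < p.1) := by
  obtain ⟨i, j⟩ := y
  revert i
  simp only [Fin.forall_fin_two, Minimal, Set.mem_compl_iff, Prod.forall, Prod.mk_le_mk,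
    mem_twoRow_zero, mem_twoRow_one, not_lt, le_refl, zero_le, nonpos_iff_eq_zero, one_ne_zero,
    zero_ne_one, true_and, false_and, and_true, or_false, false_or, IsEmpty.forall_iff,
    implies_true, imp_false, not_le]
  constructor
  · refine ⟨fun ⟨h, hmin⟩ => ?_,
      fun h => ⟨h.ge, fun b hb _ => Fin.le_def.2 (h ▸ hb)⟩⟩
    exact le_antisymm (Fin.le_def.1 (hmin ⟨p.1, by omega⟩ le_rfl (Fin.le_def.2 h))) h
  · refine ⟨fun ⟨h, hlt, hmin⟩ => ?_,
      fun ⟨h, hlt⟩ => ⟨h.ge, fun b hb => ?_, fun b hb _ => ?_⟩⟩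
    · have : j.val ≤ p.2 := Fin.le_def.1 (hmin ⟨p.2, by omega⟩ le_rfl (Fin.le_def.2 h))
      have : j.val < p.1 := by by_contra! hj; exact lt_irrefl j (hlt j hj)
      omega
    · exact Fin.lt_def.2 (by omega)
    · exact Fin.le_def.2 (by omega)

lemma exists_val_eq_and_le {c : ℕ} {j : Fin m} :
    (∃ b : Fin m, b.val = c ∧ j ≤ b) ↔ c < m ∧ j.val ≤ c :=
  ⟨fun ⟨b, hb, hjb⟩ => hb ▸ ⟨b.isLt, hjb⟩,
    fun ⟨hc, hjc⟩ => ⟨⟨c, hc⟩, rfl, hjc⟩⟩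

def step (m : ℕ) (p : ℕ × ℕ) : ℕ × ℕ :=
  let r := if p.2 < p.1 then p.2 + 1 else 0
  (if p.1 < m then p.1 + 1 else r, r)

lemma step_mem_shapes (hp : p ∈ shapes m) : step m p ∈ shapes m := by
  obtain ⟨a, b⟩ := p
  simp only [shapes, step, Set.mem_ofPred_eq] at hp ⊢
  split_ifs <;> omega

lemma XRev_twoRow (hp : p ∈ shapes m) : XRev (twoRow m p) = twoRow m (step m p) := by
  have hm := hp.2
  refine Set.ext (Prod.forall.2 (Fin.forall_fin_two.2 ⟨fun j => ?_, fun j => ?_⟩)) <;>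
  simp only [XRev, Set.mem_ofPred_eq, minimal_compl_twoRow_iff, Prod.exists,
    Fin.exists_fin_two, Prod.mk_le_mk, mem_twoRow_zero, mem_twoRow_one, step, le_refl, zero_le,
    nonpos_iff_eq_zero, zero_ne_one, one_ne_zero, true_and, false_and, and_false, or_false,
    false_or, exists_false] <;>
  simp only [and_right_comm, exists_and_right, exists_val_eq_and_le] <;> split_ifs <;> omega

lemma iterate_step_mem_shapes (hp : p ∈ shapes m) (k : ℕ) : (step m)^[k] p ∈ shapes m :=
  Set.MapsTo.iterate (fun _ => step_mem_shapes) k hp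

lemma XRev_iterate_twoRow (hp : p ∈ shapes m) (k : ℕ) :
    XRev^[k] (twoRow m p) = twoRow m ((step m)^[k] p) := by
  induction k with
  | zero => rfl
  | succ k ih =>
    rw [Function.iterate_succ_apply', Function.iterate_succ_apply', ih,
      XRev_twoRow (iterate_step_mem_shapes hp k)]

def code (m : ℕ) (p : ℕ × ℕ) : Sym2 (ZMod (m + 2)) :=
  s(((p.1 + 1 : ℕ) : ZMod (m + 2)), ((if p.2 < p.1 then p.2 + 1 else 0 : ℕ) : ZMod (m + 2)))

lemma code_step (hp : p ∈ shapes m) : code m (step m p) = (code m p).map (· + 1) := by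
  obtain ⟨a, b⟩ := p
  obtain ⟨-, ham⟩ : b ≤ a ∧ a ≤ m := hp
  set r := if b < a then b + 1 else 0 with hr
  have hra : r ≤ a := by split_ifs at hr <;> omega
  simp only [code, step, Sym2.map_mk, ← hr]
  rcases ham.lt_or_eq with ham | rfl
  · rw [if_pos ham, if_pos (Nat.lt_succ_of_le hra)]
    push_cast
    rfl
  · rw [if_neg (lt_irrefl a), if_neg (lt_irrefl r), Sym2.eq_swap]
    have : (a : ZMod (a + 2)) + 1 + 1 = 0 := by
      rw [add_assoc, one_add_one_eq_two]
      exact_mod_cast ZMod.natCast_self (a + 2)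
    push_cast
    rw [this]

lemma code_injOn : Set.InjOn (code m) (shapes m) := by
  rintro ⟨a, b⟩ ⟨hba, ham⟩ ⟨a', b'⟩ ⟨hba', ham'⟩ h
  have cast_inj {u v : ℕ} (hu : u < m + 2) (hv : v < m + 2) :
      (u : ZMod (m + 2)) = v ↔ u = v := by
    rw [ZMod.natCast_eq_natCast_iff', Nat.mod_eq_of_lt hu, Nat.mod_eq_of_lt hv]
  simp only [code, Sym2.eq_iff] at h
  simp only [Prod.mk.injEq]
  split_ifs at h <;> simp (disch := omega) only [cast_inj] at h <;> omega

lemma code_iterate_step (hp : p ∈ shapes m) (k : ℕ) :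
    code m ((step m)^[k] p) = (code m p).map (· + (k : ZMod (m + 2))) := by
  induction k with
  | zero => simp
  | succ k ih =>
    rw [Function.iterate_succ_apply', code_step (iterate_step_mem_shapes hp k), ih, Sym2.map_map]
    congr 1
    ext x
    simp [add_assoc]

lemma add_code_eq_zero_iff (hm : Odd m) (hp : p ∈ shapes m) :
    (code m p).add = 0 ↔ p.1 + p.2 = m := by
  obtain ⟨a, b⟩ := p
  obtain ⟨hba, ham⟩ : b ≤ a ∧ a ≤ m := hp
  simp only [code, Sym2.add_mk, ← Nat.cast_add, ZMod.natCast_eq_zero_iff]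
  obtain ⟨t, rfl⟩ := hm
  split_ifs with hb
  · refine ⟨fun h => ?_, fun h => ⟨1, by omega⟩⟩
    have := Nat.eq_of_dvd_of_lt_two_mul (by omega) h (by omega)
    omega
  · exact ⟨fun h => absurd (Nat.le_of_dvd (by omega) h) (by omega), fun h => by omega⟩

lemma XRev_iterate_twoRow_eq_iff (hm : Odd m) (hp : p ∈ shapes m) {k l : ℕ} :
    XRev^[k] (twoRow m p) = XRev^[l] (twoRow m p) ↔ (k : ZMod (m + 2)) = l := by
  rw [XRev_iterate_twoRow hp, XRev_iterate_twoRow hp,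
    twoRow_injOn.eq_iff (iterate_step_mem_shapes hp k) (iterate_step_mem_shapes hp l),
    ← code_injOn.eq_iff (iterate_step_mem_shapes hp k) (iterate_step_mem_shapes hp l),
    code_iterate_step hp, code_iterate_step hp,
    (Sym2.map_add_right_injective (hm.add_even even_two) _).eq_iff]

lemma minimalPeriod_XRev_twoRow (hm : Odd m) (hp : p ∈ shapes m) :
    Function.minimalPeriod XRev (twoRow m p) = m + 2 := by
  refine eq_of_forall_dvd fun c => ?_
  rw [← Function.isPeriodicPt_iff_minimalPeriod_dvd, ← ZMod.natCast_eq_zero_iff,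
    ← Nat.cast_zero, ← XRev_iterate_twoRow_eq_iff hm hp]
  rfl

lemma ncard_XRev_iterate_twoRow_eq_iff (hm : Odd m) (hp : p ∈ shapes m) (k : ℕ) :
    (XRev^[k] (twoRow m p)).ncard = m ↔ (code m p).add + 2 * k = 0 := by
  rw [XRev_iterate_twoRow hp, ncard_twoRow (iterate_step_mem_shapes hp k),
    ← add_code_eq_zero_iff hm (iterate_step_mem_shapes hp k), code_iterate_step hp,
    Sym2.add_map_add_right, nsmul_eq_mul, Nat.cast_ofNat]

variable {I : Set (Fin 2 × Fin m)}

lemma XOrbit_eq_range (I : Set (Fin 2 × Fin m)) : XOrbit I = Set.range (XRev^[·] I) := rfl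

lemma isLowerSet_of_mem_XOrbit {J : Set (Fin 2 × Fin m)} (hI : IsLowerSet I)
    (hJ : J ∈ XOrbit I) : IsLowerSet J := by
  obtain ⟨p, hp, rfl⟩ := exists_eq_twoRow hI
  obtain ⟨k, rfl⟩ := hJ
  rw [XRev_iterate_twoRow hp]
  exact isLowerSet_twoRow (iterate_step_mem_shapes hp k)

lemma mem_periodicPts_XRev (hm : Odd m) (hI : IsLowerSet I) :
    I ∈ Function.periodicPts XRev := by
  obtain ⟨p, hp, rfl⟩ := exists_eq_twoRow hI
  rw [← Function.minimalPeriod_pos_iff_mem_periodicPts, minimalPeriod_XRev_twoRow hm hp]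
  omega

lemma ncard_XOrbit (hm : Odd m) (hI : IsLowerSet I) : (XOrbit I).ncard = m + 2 := by
  rw [XOrbit_eq_range, Function.ncard_range_iterate (mem_periodicPts_XRev hm hI)]
  obtain ⟨p, hp, rfl⟩ := exists_eq_twoRow hI
  exact minimalPeriod_XRev_twoRow hm hp

lemma XOrbit_eq_of_mem {J : Set (Fin 2 × Fin m)} (hm : Odd m) (hI : IsLowerSet I)
    (hJ : J ∈ XOrbit I) : XOrbit J = XOrbit I :=
  Function.range_iterate_eq_of_mem (mem_periodicPts_XRev hm hI) hJ

lemma existsUnique_mem_XOrbit_ncard_eq (hm : Odd m) (hI : IsLowerSet I) :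
    ∃! J, J ∈ XOrbit I ∧ J.ncard = m := by
  obtain ⟨p, hp, rfl⟩ := exists_eq_twoRow hI
  obtain ⟨u, hu⟩ := (ZMod.isUnit_two (hm.add_even even_two)).exists_right_inv
  refine ⟨XRev^[(u * -(code m p).add).val] (twoRow m p), ⟨⟨_, rfl⟩, ?_⟩, ?_⟩
  · rw [ncard_XRev_iterate_twoRow_eq_iff hm hp, ZMod.natCast_zmod_val, ← mul_assoc, hu, one_mul,
      add_neg_cancel]
  · rintro _ ⟨⟨k, rfl⟩, hk⟩
    rw [ncard_XRev_iterate_twoRow_eq_iff hm hp] at hk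
    rw [XRev_iterate_twoRow_eq_iff hm hp, ZMod.natCast_zmod_val, neg_eq_of_add_eq_zero_right hk,
      ← mul_assoc, mul_comm u, hu, one_mul]

lemma ncard_setOf_isLowerSet_ncard_eq (hm : Odd m) :
    {I : Set (Fin 2 × Fin m) | IsLowerSet I ∧ I.ncard = m}.ncard = (m + 1) / 2 := by
  obtain ⟨t, rfl⟩ := hm
  have hshape {a : ℕ} (ha : a ∈ Set.Icc (t + 1) (2 * t + 1)) :
      (a, 2 * t + 1 - a) ∈ shapes (2 * t + 1) :=
    ⟨by have := ha.1; dsimp only; omega, ha.2⟩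
  have : {I : Set (Fin 2 × Fin (2 * t + 1)) | IsLowerSet I ∧ I.ncard = 2 * t + 1} =
      (fun a => twoRow (2 * t + 1) (a, 2 * t + 1 - a)) '' Set.Icc (t + 1) (2 * t + 1) := by
    ext I
    constructor
    · rintro ⟨hI, hIm⟩
      obtain ⟨⟨a, b⟩, hp, rfl⟩ := exists_eq_twoRow hI
      have hab : a + b = 2 * t + 1 := by rwa [ncard_twoRow hp] at hIm
      obtain ⟨hba, ham⟩ : b ≤ a ∧ a ≤ 2 * t + 1 := hp
      refine ⟨a, ⟨by omega, ham⟩, ?_⟩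
      dsimp only
      rw [show 2 * t + 1 - a = b by omega]
    · rintro ⟨a, ha, rfl⟩
      refine ⟨isLowerSet_twoRow (hshape ha), ?_⟩
      rw [ncard_twoRow (hshape ha)]
      have := ha.2
      dsimp only
      omega
  rw [this, Set.InjOn.ncard_image, Set.ncard_Icc_nat]
  · omega
  · intro a ha b hb h
    exact (Prod.mk.inj (twoRow_injOn (hshape ha) (hshape hb) h)).1

lemma ncard_setOf_XOrbit (hm : Odd m) :
    {O | ∃ I : Set (Fin 2 × Fin m), IsLowerSet I ∧ O = XOrbit I}.ncard = (m + 1) / 2 := by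
  have : {O | ∃ I : Set (Fin 2 × Fin m), IsLowerSet I ∧ O = XOrbit I} =
      XOrbit '' {I | IsLowerSet I ∧ I.ncard = m} := by
    ext O
    constructor
    · rintro ⟨I, hI, rfl⟩
      obtain ⟨J, ⟨hJ, hJm⟩, -⟩ := existsUnique_mem_XOrbit_ncard_eq hm hI
      exact ⟨J, ⟨isLowerSet_of_mem_XOrbit hI hJ, hJm⟩, XOrbit_eq_of_mem hm hI hJ⟩
    · rintro ⟨J, ⟨hJ, -⟩, rfl⟩
      exact ⟨J, hJ, rfl⟩
  rw [this, Set.InjOn.ncard_image, ncard_setOf_isLowerSet_ncard_eq hm]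
  rintro L ⟨hL, hLm⟩ L' ⟨-, hL'm⟩ h
  exact (existsUnique_mem_XOrbit_ncard_eq hm hL).unique ⟨⟨0, rfl⟩, hLm⟩
    ⟨by rw [h]; exact ⟨0, rfl⟩, hL'm⟩

end TwoRow

open TwoRow in
theorem stmt7 (n : ℕ) (hn : 3 ≤ n) :
    Set.ncard {O : Set (Set (Fin 2 × Fin (2 * n - 3))) |
        ∃ I : Set (Fin 2 × Fin (2 * n - 3)), IsLowerSet I ∧ O = XOrbit I} = n - 1 ∧
      ∀ I : Set (Fin 2 × Fin (2 * n - 3)), IsLowerSet I →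
        (XOrbit I).ncard = 2 * n - 1 ∧
          (∃! J : Set (Fin 2 × Fin (2 * n - 3)), J ∈ XOrbit I ∧ J.ncard = 2 * n - 3) := by
  have hm : Odd (2 * n - 3) := ⟨n - 2, by omega⟩
  refine ⟨?_, fun I hI => ⟨?_, existsUnique_mem_XOrbit_ncard_eq hm hI⟩⟩
  · rw [ncard_setOf_XOrbit hm]
    omega
  · rw [ncard_XOrbit hm hI]
    omega
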